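/- arXiv:1204.5554 — 6 statements merged into one kernel-verified Lean document; each statement's English description precedes it below -/
import Mathlib

section
/- Let A be an n×n matrix over a commutative ring with n ≥ 4, and define σ_t(A) = (−1)^t·(coefficient of λ^{n−t} in det(λI−A)). Then σ₂(A²) = σ₂(A)² − 2σ₃(A)tr(A) + 2σ₄(A). -/
/-!
With `charpolyRev M = det (1 - X • M)`, whose `t`-th coefficient is `(-1) ^ t * σ_t(M)` for
`t ≤ n`, the factorisation `det (1 - X² • A²) = det (1 - X • A) * det (1 + X • A)` expresses
the coefficients of `charpolyRev (A * A)` through those of `charpolyRev A`; comparing the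
coefficients of `X ^ 4` gives the identity.
-/

noncomputable def sigmaCoeff {R : Type*} [CommRing R] {n : ℕ} (t : ℕ)
    (M : Matrix (Fin n) (Fin n) R) : R :=
  (-1 : R) ^ t * M.charpoly.coeff (n - t)

open Polynomial

namespace Matrix

variable {R : Type*} [CommRing R] {ι : Type*} [Fintype ι] [DecidableEq ι]

lemma expand_charpolyRev_mul_self (M : Matrix ι ι R) :
    expand R 2 (M * M).charpolyRev = M.charpolyRev * (-M).charpolyRev := by
  rw [charpolyRev, charpolyRev, charpolyRev, ← det_mul, AlgHom.map_det]
  congr 1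
  have hexpand : (expand R 2).mapMatrix (1 - (X : R[X]) • (M * M).map C) =
      1 - (X ^ 2 : R[X]) • (M * M).map C := by
    refine Matrix.ext fun i j => ?_
    simp only [AlgHom.mapMatrix_apply, map_apply, sub_apply, smul_apply, smul_eq_mul, map_sub,
      map_mul, expand_X, expand_C, one_apply]
    split_ifs <;> simp
  rw [hexpand, Matrix.map_mul, Matrix.map_neg _ (map_neg C), smul_neg, sub_neg_eq_add, sub_mul,
    one_mul, mul_add, mul_one, smul_mul_smul_comm, sq]
  abel

lemma charpolyRev_neg (M : Matrix ι ι R) :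
    (-M).charpolyRev = M.charpolyRev.comp (C (-1) * X) := by
  rw [charpolyRev, charpolyRev, comp_eq_aeval, AlgHom.map_det]
  congr 1
  ext i j
  by_cases h : i = j <;> simp [h]

lemma coeff_charpolyRev_neg (M : Matrix ι ι R) (k : ℕ) :
    (-M).charpolyRev.coeff k = (-1) ^ k * M.charpolyRev.coeff k := by
  rw [charpolyRev_neg, comp_C_mul_X_coeff, mul_comm]

lemma coeff_zero_charpolyRev (M : Matrix ι ι R) : M.charpolyRev.coeff 0 = 1 := by
  rw [coeff_zero_eq_eval_zero, eval_charpolyRev]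

lemma coeff_two_charpolyRev_mul_self (M : Matrix ι ι R) :
    (M * M).charpolyRev.coeff 2 = M.charpolyRev.coeff 2 ^ 2
      - 2 * M.charpolyRev.coeff 1 * M.charpolyRev.coeff 3 + 2 * M.charpolyRev.coeff 4 := by
  rw [← coeff_expand_mul two_pos, expand_charpolyRev_mul_self, coeff_mul,
    Finset.Nat.sum_antidiagonal_eq_sum_range_succ_mk]
  simp only [Finset.sum_range_succ, Finset.sum_range_zero, coeff_charpolyRev_neg,
    coeff_zero_charpolyRev, Nat.reduceMul, Nat.reduceSub]
  ring

end Matrix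

lemma sigmaCoeff_eq_coeff_charpolyRev {R : Type*} [CommRing R] {n t : ℕ} (ht : t ≤ n)
    (M : Matrix (Fin n) (Fin n) R) : sigmaCoeff t M = (-1) ^ t * M.charpolyRev.coeff t := by
  nontriviality R
  rw [sigmaCoeff, ← Matrix.reverse_charpoly, coeff_reverse, Matrix.charpoly_natDegree_eq_dim,
    Fintype.card_fin, revAt_le ht]

theorem sigma2_sq {R : Type*} [CommRing R] {n : ℕ} (hn : 4 ≤ n)
    (A : Matrix (Fin n) (Fin n) R) :
    sigmaCoeff 2 (A * A) =
      (sigmaCoeff 2 A) ^ 2 - 2 * sigmaCoeff 3 A * A.trace + 2 * sigmaCoeff 4 A := by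
  rw [sigmaCoeff_eq_coeff_charpolyRev (by omega), sigmaCoeff_eq_coeff_charpolyRev (by omega),
    sigmaCoeff_eq_coeff_charpolyRev (by omega), sigmaCoeff_eq_coeff_charpolyRev hn,
    ← neg_neg A.trace, ← Matrix.coeff_charpolyRev_eq_neg_trace,
    Matrix.coeff_two_charpolyRev_mul_self]
  ring
end

section
/- Let B and C be 2×2 matrices over a commutative ring and write B̄ = B − Bᵀ and C̄ = C − Cᵀ. Then −C̄·B̄·C̄ + tr(B·C̄)·C̄ = 0. -/
open Matrix

theorem zeta01_two {R : Type*} [CommRing R] (B C : Matrix (Fin 2) (Fin 2) R) :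
    -((C - Cᵀ) * (B - Bᵀ) * (C - Cᵀ)) + (B * (C - Cᵀ)).trace • (C - Cᵀ) = 0 := by
  ext i j
  fin_cases i <;> fin_cases j <;>
    simp [Matrix.mul_apply, Matrix.trace, Matrix.diag, Fin.sum_univ_two] <;> ring
end

section
/- Let A, B, C be 2×2 matrices over a commutative ring and write B̄ = B − Bᵀ, C̄ = C − Cᵀ. Then tr(A·B̄·C̄) = tr(A)·tr(B·C̄). -/
open Matrix

theorem sigma11_two {R : Type*} [CommRing R] (A B C : Matrix (Fin 2) (Fin 2) R) :
    (A * (B - Bᵀ) * (C - Cᵀ)).trace = A.trace * (B * (C - Cᵀ)).trace := by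
  simp [Matrix.trace, Matrix.mul_apply, Matrix.diag, Fin.sum_univ_two, Matrix.transpose_apply]
  ring
end

section
/- Let A and C be 3×3 matrices over a commutative ring, write C̄ = C − Cᵀ, and let σ₂(A) denote the coefficient of λ in det(λI − A) (so σ₂(A) = (tr(A)² − tr(A²))/2 when 2 is invertible). Then −(Aᵀ)²·C̄ − Aᵀ·C̄·A − C̄·A² + tr(A)·Aᵀ·C̄ + tr(A)·C̄·A − σ₂(A)·C̄ = 0. -/
open Matrix Polynomial

lemma charpoly_coeff_one_fin3 {R : Type*} [CommRing R] (A : Matrix (Fin 3) (Fin 3) R) :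
    A.charpoly.coeff 1 = A 0 0 * A 1 1 + A 0 0 * A 2 2 + A 1 1 * A 2 2
      - A 0 1 * A 1 0 - A 0 2 * A 2 0 - A 1 2 * A 2 1 := by
  rw [Matrix.charpoly, Matrix.det_fin_three]
  simp only [charmatrix_apply, Matrix.one_apply]
  norm_num
  ring_nf
  simp [coeff_one, coeff_X, coeff_C, coeff_C_mul, coeff_X_pow]
  ring

theorem zeta20_three {R : Type*} [CommRing R] (A C : Matrix (Fin 3) (Fin 3) R) :
    -(Aᵀ ^ 2 * (C - Cᵀ)) - Aᵀ * (C - Cᵀ) * A - (C - Cᵀ) * A ^ 2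
      + A.trace • (Aᵀ * (C - Cᵀ)) + A.trace • ((C - Cᵀ) * A)
      - A.charpoly.coeff 1 • (C - Cᵀ) = 0 := by
  rw [charpoly_coeff_one_fin3]
  ext i j
  simp [pow_two, Matrix.mul_apply, Matrix.trace, Matrix.diag, Fin.sum_univ_three,
    Matrix.smul_apply, Matrix.sub_apply, Matrix.transpose_apply]
  fin_cases i <;> fin_cases j <;> simp <;> ring
end

section
/- Let A, B, C be 3×3 matrices over a commutative ring, and write B̄ = B − Bᵀ, C̄ = C − Cᵀ. Then A·B̄·C̄ + B̄·Aᵀ·C̄ + B̄·C̄·A − tr(A)·B̄·C̄ − tr(B·C̄)·A − tr(A·B̄·C̄)·I + tr(A)·tr(B·C̄)·I = 0. -/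
open Matrix

set_option maxHeartbeats 2000000 in
theorem chi11_three {R : Type*} [CommRing R] (A B C : Matrix (Fin 3) (Fin 3) R) :
    A * (B - Bᵀ) * (C - Cᵀ) + (B - Bᵀ) * Aᵀ * (C - Cᵀ) + (B - Bᵀ) * (C - Cᵀ) * A
      - A.trace • ((B - Bᵀ) * (C - Cᵀ)) - (B * (C - Cᵀ)).trace • A
      - (A * (B - Bᵀ) * (C - Cᵀ)).trace • (1 : Matrix (Fin 3) (Fin 3) R)
      + (A.trace * (B * (C - Cᵀ)).trace) • (1 : Matrix (Fin 3) (Fin 3) R) = 0 := by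
  ext i j
  fin_cases i <;> fin_cases j <;>
    simp [Matrix.mul_apply, Fin.sum_univ_three, Matrix.trace_fin_three, Matrix.one_apply,
      Matrix.smul_apply, Matrix.sub_apply, Matrix.add_apply, Matrix.transpose_apply] <;>
    ring
end

section
/- Let B and C be 3×3 matrices over a commutative ring, and define σ₂(M) as the coefficient of λ in det(λI − M). Then σ₂(BC) + σ₂(BCᵀ) + tr(BCBCᵀ) + tr(BCBᵀC) − tr(BCBᵀCᵀ) − tr(BC)·tr(BCᵀ) = 0. -/
open Matrix

private lemma charpoly_coeff_one_fin_three {R : Type*} [CommRing R]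
    (M : Matrix (Fin 3) (Fin 3) R) :
    M.charpoly.coeff 1 = M 0 0 * M 1 1 + M 0 0 * M 2 2 + M 1 1 * M 2 2
      - M 0 1 * M 1 0 - M 0 2 * M 2 0 - M 1 2 * M 2 1 := by
  simp [Matrix.charpoly, Matrix.det_fin_three, charmatrix_apply, Polynomial.coeff_sub,
    Polynomial.coeff_mul, Finset.Nat.sum_antidiagonal_eq_sum_range_succ_mk,
    Finset.sum_range_succ, Polynomial.coeff_X, Polynomial.coeff_C]
  ring

theorem sigma02_three {R : Type*} [CommRing R] (B C : Matrix (Fin 3) (Fin 3) R) :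
    (B * C).charpoly.coeff 1 + (B * Cᵀ).charpoly.coeff 1
      + (B * C * B * Cᵀ).trace + (B * C * Bᵀ * C).trace - (B * C * Bᵀ * Cᵀ).trace
      - (B * C).trace * (B * Cᵀ).trace = 0 := by
  rw [charpoly_coeff_one_fin_three, charpoly_coeff_one_fin_three]
  simp [Matrix.trace, Matrix.mul_apply, Matrix.diag, Fin.sum_univ_three]
  ring
end
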